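/- arXiv:1308.2420 — 2 statements merged into one kernel-verified Lean document; each statement's English description precedes it below -/
import Mathlib

section
/- Let n, r ≥ 2 be integers. If the variety C_r(N_n) is irreducible in the Zariski topology, then for every (x_1,…,x_r) ∈ C_r(N_n), the (not necessarily unital) associative k-subalgebra ⟨x_1,…,x_r⟩ of Mat_n(k) generated by x_1,…,x_r has dimension at most n − 1. -/
/-!
If the `i`-th matrix `N` of a tuple in `C_r(N_n)` satisfies `N ^ (n - 1) ≠ 0`, then `N` has a
cyclic vector, so every nilpotent matrix commuting with `N` lies in the span of
`N, N ^ 2, …, N ^ (n - 1)`; in particular the algebra generated by the tuple has dimension `< n`.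
Tuples with `N ^ (n - 1) ≠ 0` form a Zariski open set, which meets `C_r(N_n)` (put a nilpotent
Jordan block in one slot and zeros elsewhere), while tuples generating an algebra of dimension
`< d` form a Zariski closed set: it is cut out by all `d × d` minors of all `d`-families of
nonempty words in the generic matrices. An open subset meeting an irreducible set is dense in it,
so the closed condition holds on all of `C_r(N_n)`.
-/

open MvPolynomial Matrix TopologicalSpace

/-- The Zariski topology on `r`-tuples of `n × n` matrices over `k`, identified with
affine space `k^(r·n²)`: the topology generated by complements of hypersurfaces
(its closed sets are exactly the common zero loci of families of polynomials in the
matrix entries). -/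
noncomputable def matTupleZariski (k : Type*) [CommRing k] (n r : ℕ) :
    TopologicalSpace (Fin r → Matrix (Fin n) (Fin n) k) :=
  TopologicalSpace.generateFrom
    {U | ∃ p : MvPolynomial (Fin r × Fin n × Fin n) k,
      U = {x | MvPolynomial.eval (fun q => x q.1 q.2.1 q.2.2) p ≠ 0}}

/-- `C_r(N_n)`: the set of commuting `r`-tuples of nilpotent `n × n` matrices. -/
def nilCommTuples (k : Type*) [Field k] (n r : ℕ) :
    Set (Fin r → Matrix (Fin n) (Fin n) k) :=
  {x | (∀ i, IsNilpotent (x i)) ∧ ∀ i j, x i * x j = x j * x i}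

open Module Submodule Set Topology

section LinearAlgebra

variable {k V : Type*} [Field k] [AddCommGroup V] [Module k V]

theorem finrank_span_range_lt_iff [FiniteDimensional k V] {α : Type*} {f : α → V} {d : ℕ} :
    finrank k (span k (range f)) < d ↔ ∀ a : Fin d → α, ¬LinearIndependent k (f ∘ a) := by
  constructor
  · intro h a ha
    have hle := Submodule.finrank_mono (span_mono (R := k) (range_comp_subset_range a f))
    rw [finrank_span_eq_card ha, Fintype.card_fin] at hle
    omega
  · intro h
    obtain ⟨κ, a, -, hspan, hli⟩ := exists_linearIndependent' k f
    have := hli.finite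
    cases nonempty_fintype κ
    rw [← hspan, finrank_span_eq_card hli]
    by_contra! hd
    obtain ⟨e⟩ : Nonempty (Fin d ↪ κ) :=
      Function.Embedding.nonempty_of_card_le (by simpa using hd)
    exact h (a ∘ e) (hli.comp e e.injective)

theorem linearIndependent_iff_exists_det_ne_zero {ι : Type*} [Fintype ι] {d : ℕ}
    (v : Fin d → ι → k) :
    LinearIndependent k v ↔ ∃ c : Fin d → ι, (of fun i j => v i (c j)).det ≠ 0 := by
  constructor
  · intro hv
    let M : Matrix (Fin d) ι k := of v
    have hcols : span k (range M.col) = ⊤ := by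
      apply Submodule.eq_top_of_finrank_eq
      rw [← M.rank_eq_finrank_span_cols, M.rank_eq_finrank_span_row, finrank_fin_fun]
      exact (finrank_span_eq_card hv).trans (Fintype.card_fin d)
    obtain ⟨κ, a, -, hspan, hli⟩ := exists_linearIndependent' k M.col
    have := hli.finite
    cases nonempty_fintype κ
    have hcard : Fintype.card κ = d := by
      rw [← finrank_span_eq_card hli, hspan, hcols, finrank_top, finrank_fin_fun]
    let e := Fintype.equivFinOfCardEq hcard
    refine ⟨a ∘ e.symm, fun hdet => ?_⟩
    have hunit := linearIndependent_cols_iff_isUnit.1 (hli.comp e.symm e.symm.injective)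
    exact ((isUnit_iff_isUnit_det _).1 hunit).ne_zero hdet
  · rintro ⟨c, hc⟩
    have hrows := linearIndependent_rows_iff_isUnit.2
      ((isUnit_iff_isUnit_det _).2 (isUnit_iff_ne_zero.2 hc))
    exact LinearIndependent.of_comp (LinearMap.funLeft k k c) hrows

theorem Matrix.linearIndependent_iff_exists_det_ne_zero {m m' : Type*} [Fintype m]
    [Fintype m'] {d : ℕ} (v : Fin d → Matrix m m' k) :
    LinearIndependent k v ↔
      ∃ c : Fin d → m × m', (of fun i j => v i (c j).1 (c j).2).det ≠ 0 := by
  let uncurry : Matrix m m' k ≃ₗ[k] (m × m' → k) :=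
    ((LinearEquiv.curry k k m m').trans (ofLinearEquiv k)).symm
  rw [← LinearMap.linearIndependent_iff uncurry.toLinearMap uncurry.ker,
    _root_.linearIndependent_iff_exists_det_ne_zero]
  rfl

end LinearAlgebra

namespace Module.End

variable {k V : Type*} [Field k] [AddCommGroup V] [Module k V]

theorem pow_finrank_eq_zero_of_isNilpotent [FiniteDimensional k V] {f : End k V}
    (hf : IsNilpotent f) : f ^ finrank k V = 0 := by
  obtain ⟨m, hm⟩ := hf
  have hker := ker_pow_le_ker_pow_finrank f m
  rwa [hm, LinearMap.ker_zero, top_le_iff, LinearMap.ker_eq_top] at hker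

theorem linearIndependent_pow_apply {f : End k V} {v : V} {m : ℕ} (hm : (f ^ m) v ≠ 0)
    (hm' : (f ^ (m + 1)) v = 0) :
    LinearIndependent k fun i : Fin (m + 1) => (f ^ (i : ℕ)) v := by
  induction m generalizing v with
  | zero => simpa [linearIndependent_unique_iff] using hm
  | succ m ih =>
    have hshift : ∀ j, (f ^ j) (f v) = (f ^ (j + 1)) v := fun j => by
      rw [pow_succ, mul_apply]
    have htail := ih (v := f v) (by rwa [hshift]) (by rwa [hshift])
    have hcons : (fun i : Fin (m + 2) => (f ^ (i : ℕ)) v) =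
        Fin.cons v fun i : Fin (m + 1) => (f ^ (i : ℕ)) (f v) := by
      ext i
      refine Fin.cases ?_ (fun i => ?_) i <;> simp [hshift]
    rw [hcons, linearIndependent_finCons]
    refine ⟨htail, fun hv => hm ?_⟩
    have hker : span k (range fun i : Fin (m + 1) => (f ^ (i : ℕ)) (f v)) ≤
        LinearMap.ker (f ^ (m + 1)) := by
      refine span_le.2 ?_
      rintro _ ⟨i, rfl⟩
      show (f ^ (m + 1)) ((f ^ (i : ℕ)) (f v)) = 0
      rw [hshift, ← mul_apply, ← pow_add, show m + 1 + (i + 1) = i + (m + 1 + 1) by ring,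
        pow_add, mul_apply, hm', map_zero]
    exact hker hv

theorem exists_eq_sum_smul_pow_of_commute {f g : End k V} {v : V} {n : ℕ}
    (hv : span k (range fun i : Fin n => (f ^ (i : ℕ)) v) = ⊤) (hfg : Commute f g) :
    ∃ c : Fin n → k, g = ∑ i, c i • f ^ (i : ℕ) := by
  obtain ⟨c, hc⟩ := (mem_span_range_iff_exists_fun k).1 (hv ▸ mem_top : g v ∈ _)
  refine ⟨c, LinearMap.ext_on_range hv fun j => ?_⟩
  have hpow_comm : ∀ i j : ℕ, (f ^ i) ((f ^ j) v) = (f ^ j) ((f ^ i) v) := fun i j => by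
    rw [← mul_apply, ← pow_add, add_comm, pow_add, mul_apply]
  calc g ((f ^ (j : ℕ)) v) = (f ^ (j : ℕ)) (g v) := by
        rw [← mul_apply, ← (hfg.pow_left _).eq, mul_apply]
    _ = (∑ i, c i • f ^ (i : ℕ)) ((f ^ (j : ℕ)) v) := by
        simp [← hc, map_sum, hpow_comm]

theorem mem_span_pow_succ_of_commute [FiniteDimensional k V] {f g : End k V}
    (hf : IsNilpotent f) (hcyc : f ^ (finrank k V - 1) ≠ 0) (hfg : Commute f g)
    (hg : IsNilpotent g) :
    g ∈ span k (range fun i : Fin (finrank k V - 1) => f ^ ((i : ℕ) + 1)) := by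
  obtain ⟨m, hm⟩ : ∃ m, finrank k V = m + 1 := Nat.exists_eq_succ_of_ne_zero fun h => by
    have := finrank_zero_iff.1 h
    exact hcyc (Subsingleton.elim _ _)
  have := Module.nontrivial_of_finrank_eq_succ hm
  rw [hm, Nat.add_sub_cancel] at hcyc ⊢
  obtain ⟨v, hv⟩ : ∃ v, (f ^ m) v ≠ 0 := by
    by_contra! h
    exact hcyc (LinearMap.ext h)
  have hli := linearIndependent_pow_apply hv
    (by rw [← hm, pow_finrank_eq_zero_of_isNilpotent hf, LinearMap.zero_apply])
  obtain ⟨c, rfl⟩ := exists_eq_sum_smul_pow_of_commute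
    (hli.span_eq_top_of_card_eq_finrank (by rw [Fintype.card_fin, hm])) hfg
  rw [Fin.sum_univ_succ, Fin.val_zero, pow_zero] at hg ⊢
  set h := ∑ i : Fin m, c i.succ • f ^ ((i.succ : Fin (m + 1)) : ℕ)
  have hh : h ∈ span k (range fun i : Fin m => f ^ ((i : ℕ) + 1)) :=
    sum_mem fun i _ => smul_mem _ _ (subset_span ⟨i, by simp⟩)
  have hc₀ : c 0 = 0 := by
    have hhf : h = f * ∑ i : Fin m, c i.succ • f ^ (i : ℕ) := by
      simp [h, Finset.mul_sum, pow_succ']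
    have hnil : IsNilpotent h := hhf ▸ Commute.isNilpotent_mul_right
      (Commute.sum_right _ _ _ fun i _ => ((Commute.refl f).pow_right _).smul_right _) hf
    have hscalar : IsNilpotent (algebraMap k (End k V) (c 0)) := by
      have := (((Commute.one_left h).smul_left (c 0)).add_left (Commute.refl h)).isNilpotent_sub
        hg hnil
      simpa [Algebra.algebraMap_eq_smul_one] using this
    exact ((IsNilpotent.map_iff (algebraMap k (End k V)).injective).1 hscalar).eq_zero
  simpa [hc₀] using hh

end Module.End

theorem Matrix.mem_span_pow_succ_of_commute {k : Type*} [Field k] {n : ℕ}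
    {N A : Matrix (Fin n) (Fin n) k} (hN : IsNilpotent N) (hcyc : N ^ (n - 1) ≠ 0)
    (hNA : Commute N A) (hA : IsNilpotent A) :
    A ∈ span k (range fun i : Fin (n - 1) => N ^ ((i : ℕ) + 1)) := by
  let e := toLinAlgEquiv' (R := k) (n := Fin n)
  have hmem := Module.End.mem_span_pow_succ_of_commute (hN.map e)
    (by rwa [finrank_fin_fun, ← map_pow, map_ne_zero_iff _ e.injective]) (hNA.map e) (hA.map e)
  rw [finrank_fin_fun] at hmem
  rw [← Submodule.apply_mem_span_image_iff_mem_span (f := e.toLinearMap) e.injective,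
    ← range_comp]
  simpa [Function.comp_def] using hmem

theorem Matrix.exists_isNilpotent_pow_ne_zero {k : Type*} [Semiring k] [Nontrivial k] {n : ℕ}
    (hn : n ≠ 0) : ∃ N : Matrix (Fin n) (Fin n) k, IsNilpotent N ∧ N ^ (n - 1) ≠ 0 := by
  let N : Matrix (Fin n) (Fin n) k := of fun p q => if (q : ℕ) = p + 1 then 1 else 0
  have hpow : ∀ m (p q : Fin n), (N ^ m) p q = if (q : ℕ) = p + m then 1 else 0 := by
    intro m
    induction m with
    | zero => intro p q; simp [one_apply, Fin.ext_iff, eq_comm]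
    | succ m ih =>
      intro p q
      rw [pow_succ, mul_apply]
      simp only [ih, N, of_apply, boole_mul]
      rw [Fin.sum_univ_eq_sum_range
        (fun t => if t = (p : ℕ) + m then if (q : ℕ) = t + 1 then (1 : k) else 0 else 0),
        Finset.sum_ite_eq', ← add_assoc]
      by_cases hq : (q : ℕ) = p + m + 1
      · rw [if_pos (Finset.mem_range.2 (by omega))]
      · simp [hq]
  refine ⟨N, ⟨n, ?_⟩, fun h => ?_⟩
  · ext p q
    rw [hpow, if_neg (by omega), zero_apply]
  · have h₀ := congrFun (congrFun h ⟨0, by omega⟩) ⟨n - 1, by omega⟩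
    rw [hpow, if_pos (by simp)] at h₀
    exact one_ne_zero h₀

theorem NonUnitalAlgebra.isNilpotent_of_mem_adjoin {R A : Type*} [CommSemiring R] [Semiring A]
    [Algebra R A] {s : Set A} (hs : ∀ a ∈ s, IsNilpotent a)
    (hcomm : ∀ a ∈ s, ∀ b ∈ s, Commute a b) {x : A} (hx : x ∈ adjoin R s) :
    IsNilpotent x := by
  have hc : ∀ {a b}, a ∈ adjoin R s → b ∈ adjoin R s → Commute a b := fun ha hb =>
    commute_of_mem_adjoin_of_forall_mem_commute hb fun b hb' =>
      (commute_of_mem_adjoin_of_forall_mem_commute ha fun a ha' => hcomm b hb' a ha').symm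
  induction hx using adjoin_induction with
  | mem x hx => exact hs x hx
  | add x y hx hy ihx ihy => exact (hc hx hy).isNilpotent_add ihx ihy
  | zero => exact IsNilpotent.zero
  | mul x y hx hy _ ihy => exact (hc hx hy).isNilpotent_mul_left ihy
  | smul r x _ ih => exact ih.smul r

theorem Subsemigroup.coe_closure_range_eq_range_list_prod {M ι : Type*} [Monoid M] (x : ι → M) :
    (closure (range x) : Set M) = range fun w : {w : List ι // w ≠ []} => (w.1.map x).prod := by
  ext y
  constructor
  · intro hy
    induction hy using closure_induction with
    | mem _ h =>
      obtain ⟨i, rfl⟩ := h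
      exact ⟨⟨[i], List.cons_ne_nil _ _⟩, by simp⟩
    | mul _ _ _ _ h₁ h₂ =>
      obtain ⟨w₁, rfl⟩ := h₁
      obtain ⟨w₂, rfl⟩ := h₂
      exact ⟨⟨w₁.1 ++ w₂.1, by simp [w₁.2]⟩, by simp⟩
  · rintro ⟨⟨w, hw⟩, rfl⟩
    obtain ⟨a, l, rfl⟩ := List.exists_cons_of_ne_nil hw
    induction l generalizing a with
    | nil => simpa using subset_closure (mem_range_self a)
    | cons b l ih =>
      show (List.map x (a :: b :: l)).prod ∈ closure (range x)
      rw [List.map_cons, List.prod_cons]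
      exact mul_mem (subset_closure (mem_range_self a)) (ih b (List.cons_ne_nil _ _))

section Zariski

variable {k : Type*} [Field k] {n r : ℕ}

variable (k n r) in
noncomputable def genericMatrix (i : Fin r) :
    Matrix (Fin n) (Fin n) (MvPolynomial (Fin r × Fin n × Fin n) k) :=
  of fun p q => X (i, p, q)

theorem map_eval_genericMatrix (x : Fin r → Matrix (Fin n) (Fin n) k) (i : Fin r) :
    (genericMatrix k n r i).map (eval fun q => x q.1 q.2.1 q.2.2) = x i := by
  ext
  simp [genericMatrix]

theorem map_eval_list_prod_genericMatrix (x : Fin r → Matrix (Fin n) (Fin n) k)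
    (w : List (Fin r)) :
    (w.map (genericMatrix k n r)).prod.map (eval fun q => x q.1 q.2.1 q.2.2) = (w.map x).prod := by
  rw [← RingHom.mapMatrix_apply, map_list_prod, List.map_map]
  simp [Function.comp_def, map_eval_genericMatrix]

theorem isClosed_setOf_eval_eq_zero (p : MvPolynomial (Fin r × Fin n × Fin n) k) :
    IsClosed[matTupleZariski k n r] {x | eval (fun q => x q.1 q.2.1 q.2.2) p = 0} := by
  let := matTupleZariski k n r
  rw [← isOpen_compl_iff]
  exact GenerateOpen.basic _ ⟨p, rfl⟩

theorem isOpen_setOf_pow_ne_zero (i : Fin r) (m : ℕ) :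
    IsOpen[matTupleZariski k n r] {x | x i ^ m ≠ 0} := by
  let := matTupleZariski k n r
  have hset : {x : Fin r → Matrix (Fin n) (Fin n) k | x i ^ m = 0} =
      ⋂ (p) (q),
        {x | eval (fun q => x q.1 q.2.1 q.2.2) ((genericMatrix k n r i ^ m) p q) = 0} := by
    ext x
    simp only [mem_iInter, ← Matrix.map_apply (f := eval _), Matrix.map_pow,
      map_eval_genericMatrix]
    exact ⟨fun (h : x i ^ m = 0) p q => by simp [h], fun h => Matrix.ext h⟩
  rw [show {x : Fin r → Matrix (Fin n) (Fin n) k | x i ^ m ≠ 0} = {x | x i ^ m = 0}ᶜ from rfl,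
    hset]
  exact (isClosed_iInter fun p => isClosed_iInter fun q =>
    isClosed_setOf_eval_eq_zero _).isOpen_compl

theorem isClosed_setOf_finrank_adjoin_lt (d : ℕ) :
    IsClosed[matTupleZariski k n r]
      {x | finrank k (NonUnitalAlgebra.adjoin k (range x)) < d} := by
  let := matTupleZariski k n r
  have hset : {x | finrank k (NonUnitalAlgebra.adjoin k (range x)) < d} =
      ⋂ (w : Fin d → {w : List (Fin r) // w ≠ []}) (c : Fin d → Fin n × Fin n),
        {x : Fin r → Matrix (Fin n) (Fin n) k | eval (fun q => x q.1 q.2.1 q.2.2)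
          (of fun i j => ((w i).1.map (genericMatrix k n r)).prod (c j).1 (c j).2).det = 0} := by
    ext x
    change finrank k (NonUnitalAlgebra.adjoin k (range x)).toSubmodule < d ↔ _
    rw [NonUnitalAlgebra.adjoin_eq_span, Subsemigroup.coe_closure_range_eq_range_list_prod,
      finrank_span_range_lt_iff]
    simp only [mem_iInter, mem_ofPred_eq]
    refine forall_congr' fun w => ?_
    rw [Matrix.linearIndependent_iff_exists_det_ne_zero, not_exists]
    refine forall_congr' fun c => ?_
    have hminor : (eval fun q => x q.1 q.2.1 q.2.2).mapMatrix
        (of fun i j => ((w i).1.map (genericMatrix k n r)).prod (c j).1 (c j).2) =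
        of fun i j => ((w i).1.map x).prod (c j).1 (c j).2 := by
      ext i j
      simp [← map_eval_list_prod_genericMatrix x]
    rw [not_not, RingHom.map_det, hminor]
    rfl
  rw [hset]
  exact isClosed_iInter fun w => isClosed_iInter fun c => isClosed_setOf_eval_eq_zero _

end Zariski

section NilCommTuples

variable {k : Type*} [Field k] {n r : ℕ}

theorem finrank_adjoin_lt_of_pow_ne_zero {x : Fin r → Matrix (Fin n) (Fin n) k}
    (hx : x ∈ nilCommTuples k n r) {i : Fin r} (hi : x i ^ (n - 1) ≠ 0) :
    finrank k (NonUnitalAlgebra.adjoin k (range x)) < n := by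
  have hn : n ≠ 0 := by
    rintro rfl
    exact hi (Subsingleton.elim _ _)
  have hle : (NonUnitalAlgebra.adjoin k (range x)).toSubmodule ≤
      span k (range fun j : Fin (n - 1) => x i ^ ((j : ℕ) + 1)) := fun y hy =>
    Matrix.mem_span_pow_succ_of_commute (hx.1 i) hi
      (NonUnitalAlgebra.commute_of_mem_adjoin_of_forall_mem_commute hy
        (by rintro _ ⟨j, rfl⟩; exact hx.2 i j))
      (NonUnitalAlgebra.isNilpotent_of_mem_adjoin (by rintro _ ⟨j, rfl⟩; exact hx.1 j)
        (by rintro _ ⟨a, rfl⟩ _ ⟨b, rfl⟩; exact hx.2 a b) hy)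
  calc finrank k (NonUnitalAlgebra.adjoin k (range x))
      ≤ finrank k (span k (range fun j : Fin (n - 1) => x i ^ ((j : ℕ) + 1))) :=
        Submodule.finrank_mono hle
    _ ≤ n - 1 := (finrank_range_le_card _).trans (Fintype.card_fin _).le
    _ < n := by omega

theorem Pi.single_mem_nilCommTuples {N : Matrix (Fin n) (Fin n) k} (hN : IsNilpotent N)
    (i : Fin r) : Pi.single i N ∈ nilCommTuples k n r := by
  refine ⟨fun j => ?_, fun j l => ?_⟩
  · rcases eq_or_ne j i with rfl | hj
    · simpa using hN
    · simp [hj]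
  · rcases eq_or_ne j i with rfl | hj
    · rcases eq_or_ne l j with rfl | hl <;> simp [*]
    · simp [hj]

end NilCommTuples

theorem finrank_adjoin_le_of_nilCommTuples_irreducible_general (k : Type*) [Field k]
    (n r : ℕ) (hn : 2 ≤ n) (hr : 2 ≤ r) :
    letI := matTupleZariski k n r
    IsIrreducible (nilCommTuples k n r) →
      ∀ x ∈ nilCommTuples k n r,
        Module.finrank k (NonUnitalAlgebra.adjoin k (Set.range x)) ≤ n - 1 := by
  let := matTupleZariski k n r
  intro hirr x hx
  let i₀ : Fin r := ⟨0, by omega⟩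
  obtain ⟨N, hN, hN'⟩ := Matrix.exists_isNilpotent_pow_ne_zero (k := k) (n := n) (by omega)
  have hmeet : (nilCommTuples k n r ∩ {y | y i₀ ^ (n - 1) ≠ 0}).Nonempty :=
    ⟨Pi.single i₀ N, Pi.single_mem_nilCommTuples hN i₀, by simpa using hN'⟩
  have hsub : nilCommTuples k n r ⊆ {y | finrank k (NonUnitalAlgebra.adjoin k (range y)) < n} :=
    (subset_closure_inter_of_isPreirreducible_of_isOpen hirr.isPreirreducible
      (isOpen_setOf_pow_ne_zero i₀ (n - 1)) hmeet).trans
      (closure_minimal (fun y hy => finrank_adjoin_lt_of_pow_ne_zero hy.1 hy.2)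
        (isClosed_setOf_finrank_adjoin_lt n))
  have hlt : finrank k (NonUnitalAlgebra.adjoin k (range x)) < n := hsub hx
  omega

/-- Let `n, r ≥ 2`. If `C_r(N_n)` is irreducible, then for every `(x₁, …, x_r) ∈ C_r(N_n)`
the non-unital `k`-subalgebra generated by `x₁, …, x_r` has dimension at most `n - 1`. -/
theorem finrank_adjoin_le_of_nilCommTuples_irreducible (k : Type*) [Field k]
    [IsAlgClosed k] (n r : ℕ) (hn : 2 ≤ n) (hr : 2 ≤ r) :
    letI := matTupleZariski k n r
    IsIrreducible (nilCommTuples k n r) →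
      ∀ x ∈ nilCommTuples k n r,
        Module.finrank k (NonUnitalAlgebra.adjoin k (Set.range x)) ≤ n - 1 :=
  finrank_adjoin_le_of_nilCommTuples_irreducible_general k n r hn hr
end

section
/- For all integers n, r ≥ 2, dim C_r(Mat_n(k)) ≥ (r+1)·⌊n²/4⌋ + r. -/
/-!
Split `n = p + q` with `p = ⌊n/2⌋ ≤ q`, so that `pq = ⌊n²/4⌋`. Conjugating
`a_i • 1 + [[0, B_i], [0, 0]]` by the lower unipotent matrix `[[1, 0], [C, 1]]` gives commuting
`r`-tuples depending polynomially on `(r + 1)pq + r` coordinates (the entries of `C`, the `a_i` and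
the entries of the `B_i`). Order the coordinates with those of `C` first. On the stratum where all
later coordinates vanish, each coordinate is read off, up to a power, by a polynomial in the matrix
entries (a matrix entry, or `det x_i = a_iⁿ`). Hence the closures of the images of the coordinate
flags form a strictly increasing chain of irreducible closed subsets of `C_r(Mat_n(k))`.
-/

open MvPolynomial Matrix TopologicalSpace

/-- `C_r(Mat_n(k))`: the set of commuting `r`-tuples of `n × n` matrices. -/
def commTuples (k : Type*) [Field k] (n r : ℕ) :
    Set (Fin r → Matrix (Fin n) (Fin n) k) :=
  {x | ∀ i j, x i * x j = x j * x i}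

lemma IsIrreducible.preimage_val {X : Type*} [TopologicalSpace X] {S T : Set X}
    (hT : IsIrreducible T) (hTS : T ⊆ S) : IsIrreducible ((↑) ⁻¹' T : Set S) := by
  have := Subtype.irreducibleSpace hT
  have h :=
    (IrreducibleSpace.isIrreducible_univ T).image _ (continuous_inclusion hTS).continuousOn
  rwa [Set.image_univ, Set.range_inclusion hTS] at h

theorem le_topologicalKrullDim_of_strictMono {X : Type*} [TopologicalSpace X] {S : Set X} {d : ℕ}
    (Z : Fin (d + 1) → Set X) (hZ : StrictMono Z) (hirr : ∀ i, IsIrreducible (Z i))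
    (hcl : ∀ i, IsClosed (Z i)) (hS : ∀ i, Z i ⊆ S) :
    (d : WithBot ℕ∞) ≤ topologicalKrullDim S := by
  let Z' : Fin (d + 1) → IrreducibleCloseds S := fun i =>
    ⟨(↑) ⁻¹' Z i, (hirr i).preimage_val (hS i), (hcl i).preimage continuous_subtype_val⟩
  have hZ' : StrictMono Z' := fun i j hij => by
    refine lt_of_le_of_ne (fun x hx => (hZ hij).1 hx) fun heq => (hZ hij).ne ?_
    rw [← Set.inter_eq_right.2 (hS i), ← Set.inter_eq_right.2 (hS j),
      ← Subtype.image_preimage_coe, ← Subtype.image_preimage_coe]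
    exact congrArg (fun W : IrreducibleCloseds S => ((↑) '' (W : Set S) : Set X)) heq
  exact Order.LTSeries.length_le_krullDim ⟨d, Z', fun i => hZ' Fin.castSucc_lt_succ⟩

lemma Nat.sq_div_four_eq_div_two_mul (n : ℕ) : n ^ 2 / 4 = n / 2 * (n - n / 2) := by
  rcases Nat.even_or_odd' n with ⟨q, rfl | rfl⟩
  · rw [show (2 * q) ^ 2 = 4 * (q * q) by ring, Nat.mul_div_cancel_left _ (by norm_num),
      show 2 * q / 2 = q by omega, show 2 * q - q = q by omega]
  · rw [show (2 * q + 1) ^ 2 = 4 * (q * q + q) + 1 by ring, show (2 * q + 1) / 2 = q by omega,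
      show (4 * (q * q + q) + 1) / 4 = q * q + q by omega, show 2 * q + 1 - q = q + 1 by omega]
    ring

namespace ShearedTuple

variable {R S : Type*} [CommRing R] [CommRing S] {m m' ι : Type*} [Fintype m] [Fintype m']
  [DecidableEq m] [DecidableEq m']

def lowerUnipotent (C : Matrix m' m R) : Matrix (m ⊕ m') (m ⊕ m') R := fromBlocks 1 0 C 1

lemma lowerUnipotent_mul_neg (C : Matrix m' m R) :
    lowerUnipotent C * lowerUnipotent (-C) = 1 := by
  simp [lowerUnipotent, fromBlocks_multiply]

lemma lowerUnipotent_neg_mul (C : Matrix m' m R) :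
    lowerUnipotent (-C) * lowerUnipotent C = 1 := by
  simpa using lowerUnipotent_mul_neg (-C)

def scalarAddUpper (a : R) (B : Matrix m m' R) : Matrix (m ⊕ m') (m ⊕ m') R :=
  fromBlocks (a • 1) B 0 (a • 1)

lemma scalarAddUpper_commute (a a' : R) (B B' : Matrix m m' R) :
    Commute (scalarAddUpper a B) (scalarAddUpper a' B') := by
  simp [Commute, SemiconjBy, scalarAddUpper, fromBlocks_multiply, smul_smul, mul_comm, add_comm]

def conjTuple (C : Matrix m' m R) (a : ι → R) (B : ι → Matrix m m' R) (i : ι) :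
    Matrix (m ⊕ m') (m ⊕ m') R :=
  lowerUnipotent C * scalarAddUpper (a i) (B i) * lowerUnipotent (-C)

lemma conjTuple_commute (C : Matrix m' m R) (a : ι → R) (B : ι → Matrix m m' R) (i j : ι) :
    Commute (conjTuple C a B i) (conjTuple C a B j) := by
  have hconj : ∀ X Y : Matrix (m ⊕ m') (m ⊕ m') R,
      lowerUnipotent C * X * lowerUnipotent (-C) * (lowerUnipotent C * Y * lowerUnipotent (-C)) =
        lowerUnipotent C * (X * Y) * lowerUnipotent (-C) := fun X Y => by
    simp only [mul_assoc, ← mul_assoc (lowerUnipotent (-C)) (lowerUnipotent C),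
      lowerUnipotent_neg_mul, one_mul]
  simp only [Commute, SemiconjBy, conjTuple, hconj, (scalarAddUpper_commute _ _ _ _).eq]

lemma conjTuple_eq_fromBlocks (C : Matrix m' m R) (a : ι → R) (B : ι → Matrix m m' R) (i : ι) :
    conjTuple C a B i =
      fromBlocks (a i • 1 - B i * C) (B i) (-(C * B i * C)) (a i • 1 + C * B i) := by
  simp only [conjTuple, lowerUnipotent, scalarAddUpper, fromBlocks_multiply, fromBlocks_inj]
  refine ⟨?_, ?_, ?_, ?_⟩
  all_goals simp only [Matrix.one_mul, Matrix.mul_one, Matrix.mul_zero, add_zero,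
    zero_add, Matrix.mul_smul, Matrix.smul_mul, Matrix.add_mul, Matrix.mul_neg, smul_zero]
  all_goals abel

lemma det_conjTuple (C : Matrix m' m R) (a : ι → R) (B : ι → Matrix m m' R) (i : ι) :
    (conjTuple C a B i).det = a i ^ (Fintype.card m + Fintype.card m') := by
  rw [conjTuple, det_mul, det_mul, mul_right_comm, ← det_mul, lowerUnipotent_mul_neg, det_one,
    one_mul, scalarAddUpper, det_fromBlocks_zero₂₁, det_smul, det_smul, det_one, det_one,
    mul_one, mul_one, ← pow_add]

lemma map_conjTuple (f : R →+* S) (C : Matrix m' m R) (a : ι → R) (B : ι → Matrix m m' R)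
    (i : ι) :
    (conjTuple C a B i).map f = conjTuple (C.map f) (f ∘ a) (fun i => (B i).map f) i := by
  simp [conjTuple, lowerUnipotent, scalarAddUpper, fromBlocks_map, Matrix.map_mul,
    smul_one_eq_diagonal, Matrix.map_neg]

abbrev Params (m m' ι : Type*) := (m' × m) ⊕ (ι ⊕ ι × m × m')

variable [DecidableEq ι]

def embShift (emb : m ↪ m') (i₀ : ι) : ι → Matrix m m' R :=
  Pi.single i₀ ((1 : Matrix m' m' R).submatrix emb id)

/-- The shift `embShift` at `i₀` is what makes `C` visible: without it the tuples with all
`B_i = 0` are scalar, hence independent of `C`. -/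
def paramTuple (emb : m ↪ m') (i₀ : ι) (t : Params m m' ι → R) :
    ι → Matrix (m ⊕ m') (m ⊕ m') R :=
  conjTuple (of fun u w => t (.inl (u, w))) (fun i => t (.inr (.inl i)))
    ((fun i => of fun w v => t (.inr (.inr (i, w, v)))) + embShift emb i₀)

lemma map_paramTuple (f : R →+* S) (emb : m ↪ m') (i₀ : ι) (t : Params m m' ι → R) (i : ι) :
    (paramTuple emb i₀ t i).map f = paramTuple emb i₀ (f ∘ t) i := by
  rw [paramTuple, map_conjTuple, paramTuple]
  congr 1
  ext j w v
  by_cases hj : j = i₀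
  · subst hj
    simp [embShift, one_apply, apply_ite f]
  · simp [embShift, hj]

lemma paramTuple_commute (emb : m ↪ m') (i₀ : ι) (t : Params m m' ι → R) (i j : ι) :
    Commute (paramTuple emb i₀ t i) (paramTuple emb i₀ t j) :=
  conjTuple_commute _ _ _ i j

lemma det_paramTuple (emb : m ↪ m') (i₀ : ι) (t : Params m m' ι → R) (i : ι) :
    (paramTuple emb i₀ t i).det = t (.inr (.inl i)) ^ (Fintype.card m + Fintype.card m') :=
  det_conjTuple _ _ _ i

lemma paramTuple_inl_inr (emb : m ↪ m') (i₀ : ι) (t : Params m m' ι → R) (i : ι) (w : m)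
    (v : m') :
    paramTuple emb i₀ t i (.inl w) (.inr v) =
      t (.inr (.inr (i, w, v))) + embShift emb i₀ i w v := by
  simp [paramTuple, conjTuple_eq_fromBlocks]

lemma paramTuple_inr_inr (emb : m ↪ m') (i₀ : ι) (t : Params m m' ι → R)
    (ht : ∀ q, t (.inr q) = 0) (u : m') (w : m) :
    paramTuple emb i₀ t i₀ (.inr u) (.inr (emb w)) = t (.inl (u, w)) := by
  simp [paramTuple, embShift, conjTuple_eq_fromBlocks, ht, Matrix.mul_apply, Matrix.one_apply]

end ShearedTuple

namespace MatTupleZariski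

open ShearedTuple

attribute [local instance] matTupleZariski

variable {k : Type*} [Field k] {n r : ℕ}

abbrev entries (x : Fin r → Matrix (Fin n) (Fin n) k) : Fin r × Fin n × Fin n → k :=
  fun q => x q.1 q.2.1 q.2.2

lemma isTopologicalBasis_basicOpen :
    IsTopologicalBasis {U : Set (Fin r → Matrix (Fin n) (Fin n) k) |
      ∃ p : MvPolynomial (Fin r × Fin n × Fin n) k, U = {x | eval (entries x) p ≠ 0}} where
  exists_subset_inter := by
    rintro _ ⟨p, rfl⟩ _ ⟨q, rfl⟩ x hx
    exact ⟨_, ⟨p * q, rfl⟩, by simpa using hx, fun y hy => by simpa using hy⟩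
  sUnion_eq := Set.sUnion_eq_univ_iff.2 fun x => ⟨_, ⟨1, rfl⟩, by simp⟩
  eq_generateFrom := rfl

lemma isClosed_setOf_eval_eq_zero (p : MvPolynomial (Fin r × Fin n × Fin n) k) :
    IsClosed {x : Fin r → Matrix (Fin n) (Fin n) k | eval (entries x) p = 0} :=
  ⟨isTopologicalBasis_basicOpen.isOpen ⟨p, rfl⟩⟩

variable (k n) in
noncomputable def genericMatrix (i : Fin r) :
    Matrix (Fin n) (Fin n) (MvPolynomial (Fin r × Fin n × Fin n) k) :=
  of fun a b => X (i, a, b)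

lemma map_eval_genericMatrix (x : Fin r → Matrix (Fin n) (Fin n) k) (i : Fin r) :
    (genericMatrix k n i).map (eval (entries x)) = x i := by
  ext a b
  simp [genericMatrix]

lemma isClosed_commTuples : IsClosed (commTuples k n r) := by
  have h : commTuples k n r = ⋂ (i) (j) (a) (b), {x | eval (entries x)
      ((genericMatrix k n i * genericMatrix k n j - genericMatrix k n j * genericMatrix k n i :
        Matrix (Fin n) (Fin n) _) a b) = 0} := by
    ext x
    have hcomm : ∀ i j, (genericMatrix k n i * genericMatrix k n j -
        genericMatrix k n j * genericMatrix k n i).map (eval (entries x)) =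
          x i * x j - x j * x i := fun i j => by
      simp only [← RingHom.mapMatrix_apply, map_sub, map_mul]
      simp only [RingHom.mapMatrix_apply, map_eval_genericMatrix]
    simp only [commTuples, Set.mem_iInter, Set.mem_ofPred_eq,
      ← Matrix.map_apply (f := eval (entries x)), hcomm]
    simp only [Matrix.sub_apply, sub_eq_zero, ← Matrix.ext_iff]
  rw [h]
  exact isClosed_iInter fun i => isClosed_iInter fun j => isClosed_iInter fun a =>
    isClosed_iInter fun b => isClosed_setOf_eval_eq_zero _

noncomputable def evalTuple {P : Type*} (ψ : Fin r → Matrix (Fin n) (Fin n) (MvPolynomial P k))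
    (t : P → k) : Fin r → Matrix (Fin n) (Fin n) k :=
  fun i => (ψ i).map (eval t)

lemma eval_entries_evalTuple {P : Type*} (ψ : Fin r → Matrix (Fin n) (Fin n) (MvPolynomial P k))
    (t : P → k) (p : MvPolynomial (Fin r × Fin n × Fin n) k) :
    eval (entries (evalTuple ψ t)) p = eval t (bind₁ (fun q => ψ q.1 q.2.1 q.2.2) p) :=
  (eval₂Hom_bind₁ (RingHom.id k) t _ p).symm

lemma isIrreducible_range_evalTuple [Infinite k] {P : Type*}
    (ψ : Fin r → Matrix (Fin n) (Fin n) (MvPolynomial P k)) :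
    IsIrreducible (Set.range (evalTuple ψ)) := by
  refine ⟨Set.range_nonempty _, ?_⟩
  rintro U V hU hV ⟨_, ⟨t, rfl⟩, htU⟩ ⟨_, ⟨t', rfl⟩, ht'V⟩
  obtain ⟨_, ⟨p, rfl⟩, hp, hpU⟩ := isTopologicalBasis_basicOpen.isOpen_iff.1 hU _ htU
  obtain ⟨_, ⟨q, rfl⟩, hq, hqV⟩ := isTopologicalBasis_basicOpen.isOpen_iff.1 hV _ ht'V
  simp only [Set.mem_ofPred_eq, eval_entries_evalTuple] at hp hq
  have hpq : bind₁ (fun q => ψ q.1 q.2.1 q.2.2) (p * q) ≠ 0 := by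
    rw [map_mul]
    exact mul_ne_zero (fun h => hp (by rw [h, map_zero])) (fun h => hq (by rw [h, map_zero]))
  obtain ⟨s, hs⟩ : ∃ s, eval s (bind₁ (fun q => ψ q.1 q.2.1 q.2.2) (p * q)) ≠ 0 := by
    by_contra! h
    exact hpq (MvPolynomial.funext fun s => by rw [h s, map_zero])
  rw [map_mul, map_mul] at hs
  refine ⟨_, ⟨s, rfl⟩, hpU ?_, hqV ?_⟩ <;>
    simp only [Set.mem_ofPred_eq, eval_entries_evalTuple]
  exacts [left_ne_zero_of_mul hs, right_ne_zero_of_mul hs]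

lemma evalTuple_indicator {P : Type*} (ψ : Fin r → Matrix (Fin n) (Fin n) (MvPolynomial P k))
    (T : Set P) (t : P → k) :
    evalTuple ψ (T.indicator t) = evalTuple (fun i => (ψ i).map (bind₁ (T.indicator X))) t := by
  ext i a b
  simp only [evalTuple, Matrix.map_apply]
  refine .trans ?_ (eval₂Hom_bind₁ (RingHom.id k) t _ (ψ i a b)).symm
  refine congrArg (eval · _) ?_
  funext p
  by_cases hp : p ∈ T <;> simp [hp]

lemma isIrreducible_image_evalTuple [Infinite k] {P : Type*}
    (ψ : Fin r → Matrix (Fin n) (Fin n) (MvPolynomial P k)) (T : Set P) :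
    IsIrreducible (evalTuple ψ '' {t | Function.support t ⊆ T}) := by
  convert isIrreducible_range_evalTuple (fun i => (ψ i).map (bind₁ (T.indicator X)))
  ext x
  constructor
  · rintro ⟨t, ht, rfl⟩
    exact ⟨t, by rw [← evalTuple_indicator, Set.indicator_eq_self.2 ht]⟩
  · rintro ⟨t, rfl⟩
    exact ⟨T.indicator t, Set.support_indicator_subset, evalTuple_indicator ψ T t⟩

/-- The chain is formed by the closures `Z s` of the images of the coordinate subspaces
`{t | rank (supp t) < s}`: the polynomial `F` attached to `p = rank⁻¹ s` vanishes on `Z s` but not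
at the image of `Pi.single p 1 ∈ Z (s + 1)`. -/
theorem le_topologicalKrullDim_of_triangular [Infinite k] {P : Type*} {d : ℕ} (rank : P ≃ Fin d)
    (ψ : Fin r → Matrix (Fin n) (Fin n) (MvPolynomial P k))
    {S : Set (Fin r → Matrix (Fin n) (Fin n) k)}
    (hS : IsClosed S) (hψS : ∀ t, evalTuple ψ t ∈ S)
    (htri : ∀ p, ∃ F : MvPolynomial (Fin r × Fin n × Fin n) k, ∀ t,
      Function.support t ⊆ {p' | rank p' ≤ rank p} →
        (eval (entries (evalTuple ψ t)) F = 0 ↔ t p = 0)) :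
    (d : WithBot ℕ∞) ≤ topologicalKrullDim S := by
  classical
  let V : ℕ → Set (P → k) := fun s => {t | Function.support t ⊆ {p | (rank p : ℕ) < s}}
  have hV : Monotone V := fun a b hab t ht p hp => lt_of_lt_of_le (ht hp) hab
  let Z : Fin (d + 1) → Set (Fin r → Matrix (Fin n) (Fin n) k) := fun s =>
    closure (evalTuple ψ '' V s)
  refine le_topologicalKrullDim_of_strictMono Z (Fin.strictMono_iff_lt_succ.2 fun s => ?_)
    (fun s => (isIrreducible_image_evalTuple ψ _).closure) (fun s => isClosed_closure)
    (fun s => closure_minimal (by rintro _ ⟨t, -, rfl⟩; exact hψS t) hS)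
  obtain ⟨F, hF⟩ := htri (rank.symm s)
  have hZF : Z s.castSucc ⊆ {x | eval (entries x) F = 0} := by
    refine closure_minimal ?_ (isClosed_setOf_eval_eq_zero F)
    rintro _ ⟨t, ht, rfl⟩
    refine (hF t fun p hp => ?_).2 (Function.notMem_support.1 fun h => ?_)
    · rw [Set.mem_ofPred_eq, Equiv.apply_symm_apply, Fin.le_iff_val_le_val]
      exact (ht hp).le
    · simpa using ht h
  have hsingle : Function.support (Pi.single (rank.symm s) (1 : k)) ⊆ {rank.symm s} :=
    Pi.support_single_subset
  refine (Set.ssubset_iff_of_subset (closure_mono (Set.image_mono (hV (by simp))))).2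
    ⟨_, subset_closure ⟨Pi.single (rank.symm s) 1, fun p hp => ?_, rfl⟩, fun hmem => ?_⟩
  · rw [hsingle hp]
    simp
  · simpa using (hF _ (hsingle.trans (by simp))).1 (hZF hmem)

lemma eval_det_genericMatrix (x : Fin r → Matrix (Fin n) (Fin n) k) (i : Fin r) :
    eval (entries x) (genericMatrix k n i).det = (x i).det := by
  rw [RingHom.map_det, RingHom.mapMatrix_apply, map_eval_genericMatrix]

variable {m m' ι : Type*} [Fintype m] [Fintype m']

noncomputable def paramRank [Fintype ι] :
    Params m m' ι ≃ Fin (Fintype.card (m' × m) + Fintype.card (ι ⊕ ι × m × m')) :=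
  (Equiv.sumCongr (Fintype.equivFin _) (Fintype.equivFin _)).trans finSumFinEquiv

lemma paramRank_inl_lt_inr [Fintype ι] (c : m' × m) (q : ι ⊕ ι × m × m') :
    paramRank (.inl c) < paramRank (.inr q) := by
  simp only [paramRank, Equiv.trans_apply, Equiv.sumCongr_apply, Sum.map_inl, Sum.map_inr,
    finSumFinEquiv_apply_left, finSumFinEquiv_apply_right, Fin.lt_def, Fin.val_castAdd,
    Fin.val_natAdd]
  omega

variable [DecidableEq m] [DecidableEq m']

variable (k) in
noncomputable def genericParamTuple (emb : m ↪ m') (e : m ⊕ m' ≃ Fin n) (i₀ : Fin r) :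
    Fin r → Matrix (Fin n) (Fin n) (MvPolynomial (Params m m' (Fin r)) k) :=
  fun i => reindex e e (paramTuple emb i₀ X i)

lemma evalTuple_genericParamTuple (emb : m ↪ m') (e : m ⊕ m' ≃ Fin n) (i₀ : Fin r)
    (t : Params m m' (Fin r) → k) :
    evalTuple (genericParamTuple k emb e i₀) t =
      fun i => reindex e e (paramTuple emb i₀ t i) := by
  funext i
  have hX : (eval t ∘ X : Params m m' (Fin r) → k) = t := funext fun _ => eval_X _
  rw [evalTuple, genericParamTuple, reindex_apply, reindex_apply, ← submatrix_map,
    map_paramTuple, hX]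

lemma genericParamTuple_triangular [Nonempty m'] (emb : m ↪ m') (e : m ⊕ m' ≃ Fin n)
    (i₀ : Fin r) (p : Params m m' (Fin r)) :
    ∃ F : MvPolynomial (Fin r × Fin n × Fin n) k, ∀ t,
      Function.support t ⊆ {p' | paramRank p' ≤ paramRank p} →
        (eval (entries (evalTuple (genericParamTuple k emb e i₀) t)) F = 0 ↔ t p = 0) := by
  rcases p with ⟨u, w⟩ | i | ⟨i, w, v⟩
  · refine ⟨X (i₀, e (.inr u), e (.inr (emb w))), fun t ht => ?_⟩
    have hinr : ∀ q, t (.inr q) = 0 := fun q => Function.notMem_support.1 fun h =>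
      (ht h).not_gt (paramRank_inl_lt_inr _ _)
    simp only [eval_X, entries, evalTuple_genericParamTuple, reindex_apply, submatrix_apply,
      Equiv.symm_apply_apply, paramTuple_inr_inr _ _ _ hinr]
  · refine ⟨(genericMatrix k n i).det, fun t _ => ?_⟩
    rw [eval_det_genericMatrix, evalTuple_genericParamTuple, det_reindex_self, det_paramTuple,
      pow_eq_zero_iff]
    have := Fintype.card_pos (α := m')
    omega
  · refine ⟨X (i, e (.inl w), e (.inr v)) - C (embShift emb i₀ i w v), fun t _ => ?_⟩
    simp only [map_sub, eval_X, eval_C, entries, evalTuple_genericParamTuple, reindex_apply,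
      submatrix_apply, Equiv.symm_apply_apply, paramTuple_inl_inr, add_sub_cancel_right]

theorem le_topologicalKrullDim_commTuples [Infinite k] [Nonempty m'] (emb : m ↪ m')
    (e : m ⊕ m' ≃ Fin n) (i₀ : Fin r) :
    (((r + 1) * (Fintype.card m * Fintype.card m') + r : ℕ) : WithBot ℕ∞) ≤
      topologicalKrullDim (commTuples k n r) := by
  have h := le_topologicalKrullDim_of_triangular paramRank (genericParamTuple k emb e i₀)
    isClosed_commTuples (fun t i j => ?_) (genericParamTuple_triangular emb e i₀)
  · have hd : Fintype.card (m' × m) + Fintype.card (Fin r ⊕ Fin r × m × m') =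
        (r + 1) * (Fintype.card m * Fintype.card m') + r := by
      simp only [Fintype.card_sum, Fintype.card_prod, Fintype.card_fin]
      ring
    rwa [hd] at h
  · rw [evalTuple_genericParamTuple]
    exact ((paramTuple_commute emb i₀ t i j).map (reindexAlgEquiv k k e)).eq

end MatTupleZariski

/-- For all integers `n, r ≥ 2`, `dim C_r(Mat_n(k)) ≥ (r+1)·⌊n²/4⌋ + r`. -/
theorem dim_commTuples_ge (k : Type*) [Field k] [IsAlgClosed k]
    (n r : ℕ) (hn : 2 ≤ n) (hr : 2 ≤ r) :
    letI := matTupleZariski k n r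
    (((r + 1) * (n ^ 2 / 4) + r : ℕ) : WithBot ℕ∞)
      ≤ topologicalKrullDim (commTuples k n r) := by
  have : Nonempty (Fin (n - n / 2)) := ⟨⟨0, by omega⟩⟩
  have h := MatTupleZariski.le_topologicalKrullDim_commTuples (k := k)
    (Fin.castLEEmb (by omega : n / 2 ≤ n - n / 2))
    (finSumFinEquiv.trans (finCongr (by omega : n / 2 + (n - n / 2) = n)))
    (⟨0, by omega⟩ : Fin r)
  rwa [Fintype.card_fin, Fintype.card_fin, ← Nat.sq_div_four_eq_div_two_mul] at h
end
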